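/- arXiv:2010.13335 — 6 statements merged into one kernel-verified Lean document; each statement's English description precedes it below -/
import Mathlib

section
/- Let 0 < a < b be real numbers and let T ≥ 1 be an integer. For any real numbers γ_0, …, γ_{T−1}, the supremum over λ ∈ [a,b] of |∏_{t=0}^{T−1}(1 − γ_t λ)| is at least the supremum over λ ∈ [a,b] of |∏_{t=0}^{T−1}(1 − γ_t^{ch} λ)|, where γ_t^{ch} are the Chebyshev steps of length T on [a,b]. In other words, the Chebyshev steps minimize the quantity sup_{λ∈[a,b]} |∏_{t=0}^{T−1}(1 − γ_t λ)| over all choices of step sizes. -/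
/-- The Chebyshev steps of length `T` on `[a, b]`:
`γ_t^{ch} = ((a+b)/2 + ((b-a)/2) cos((2t+1)π/(2T)))⁻¹`. -/
noncomputable def chebStep (a b : ℝ) (T t : ℕ) : ℝ :=
  ((a + b) / 2 + ((b - a) / 2) * Real.cos ((2 * t + 1) * Real.pi / (2 * T)))⁻¹

open Polynomial Real Finset

lemma chebT_deg_lead (n : ℕ) :
    (Polynomial.Chebyshev.T ℝ (n+1)).degree = (n+1 : ℕ) ∧
    (Polynomial.Chebyshev.T ℝ (n+1)).leadingCoeff = 2^n := by
  induction n using Nat.twoStepInduction with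
  | zero => simp [Polynomial.Chebyshev.T_one]
  | one =>
      have h2 : Polynomial.Chebyshev.T ℝ ((1:ℕ)+1) = 2 * X ^ 2 - 1 := by
        norm_num [Polynomial.Chebyshev.T_two]
      rw [h2]
      have hd : (2 * X ^ 2 - 1 : ℝ[X]).degree = (2:ℕ) := by compute_degree!
      refine ⟨hd, ?_⟩
      have : (2 * X ^ 2 - 1 : ℝ[X]).natDegree = 2 := natDegree_eq_of_degree_eq_some hd
      rw [Polynomial.leadingCoeff, this]
      simp [Polynomial.coeff_sub, Polynomial.coeff_one]
  | more n ih2 ih1 =>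
      obtain ⟨hd1, hl1⟩ := ih1
      obtain ⟨hd0, hl0⟩ := ih2
      have e1 : ((n+2:ℕ):ℤ)+1 = ((n:ℤ)+1)+2 := by push_cast; ring
      have e2 : ((n:ℤ)+1)+1 = ((n+1:ℕ):ℤ)+1 := by push_cast; ring
      have hrec : Polynomial.Chebyshev.T ℝ ((n+2:ℕ)+1)
          = 2 * X * Polynomial.Chebyshev.T ℝ ((n+1:ℕ)+1) - Polynomial.Chebyshev.T ℝ ((n:ℕ)+1) := by
        rw [e1, Polynomial.Chebyshev.T_add_two, e2]
      set p := Polynomial.Chebyshev.T ℝ ((n+1:ℕ)+1)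
      set q := Polynomial.Chebyshev.T ℝ ((n:ℕ)+1)
      have hp0 : p ≠ 0 := by
        intro h; rw [h] at hl1; simp at hl1
        exact pow_ne_zero _ two_ne_zero hl1.symm
      have hdeg2X : (2 * X : ℝ[X]).degree = 1 := by compute_degree!
      have hdmul : (2 * X * p).degree = ((n+3 : ℕ) : WithBot ℕ) := by
        rw [degree_mul, hdeg2X, hd1]
        norm_cast
        omega
      have hlt : q.degree < (2 * X * p).degree := by
        rw [hdmul, hd0]
        exact_mod_cast by omega
      constructor
      · rw [hrec, degree_sub_eq_left_of_degree_lt hlt, hdmul]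
      · rw [hrec, leadingCoeff_sub_of_degree_lt hlt, leadingCoeff_mul, hl1]
        have : (2 * X : ℝ[X]).leadingCoeff = 2 := by
          rw [leadingCoeff]
          have : (2 * X : ℝ[X]).natDegree = 1 := natDegree_eq_of_degree_eq_some hdeg2X
          rw [this]; simp
        rw [this]; ring

lemma theta_mem {T t : ℕ} (hT : 1 ≤ T) (ht : t < T) :
    (2*t+1)*π/(2*T) ∈ Set.Icc (0:ℝ) π := by
  have hπ := Real.pi_pos
  have hT' : (0:ℝ) < 2*T := by positivity
  constructor
  · positivity
  · rw [div_le_iff₀ hT']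
    have h1 : (2*t+1 : ℝ) ≤ 2*T := by
      have : (2*t+1 : ℕ) ≤ 2*T := by omega
      exact_mod_cast this
    nlinarith

lemma cos_theta_injOn (T : ℕ) (hT : 1 ≤ T) :
    Set.InjOn (fun t : ℕ => Real.cos ((2*t+1)*π/(2*T))) (Finset.range T) := by
  intro s hs t ht h
  simp only [Finset.coe_range, Set.mem_Iio] at hs ht
  have hπ := Real.pi_pos
  have hT' : (0:ℝ) < 2*T := by positivity
  have h3 := Real.strictAntiOn_cos.injOn (theta_mem hT hs) (theta_mem hT ht) h
  field_simp at h3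
  exact_mod_cast (by linarith : (s:ℝ) = t)

lemma chebT_factor (T : ℕ) (hT : 1 ≤ T) :
    Polynomial.Chebyshev.T ℝ (T:ℤ) =
      C ((2:ℝ)^(T-1)) * ∏ t ∈ Finset.range T, (X - C (Real.cos ((2*t+1)*π/(2*T)))) := by
  obtain ⟨hdf, hlf⟩ := chebT_deg_lead (T-1)
  have e : ((T-1:ℕ):ℤ)+1 = (T:ℤ) := by omega
  have e2 : (T-1)+1 = T := by omega
  rw [e] at hdf hlf
  rw [e2] at hdf
  set f := Polynomial.Chebyshev.T ℝ (T:ℤ) with hf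
  set g := C ((2:ℝ)^(T-1)) * ∏ t ∈ Finset.range T, (X - C (Real.cos ((2*t+1)*π/(2*T)))) with hg
  have hprodmonic : (∏ t ∈ Finset.range T, (X - C (Real.cos ((2*t+1)*π/(2*T))) : ℝ[X])).Monic :=
    monic_prod_of_monic _ _ (fun t _ => monic_X_sub_C _)
  have hdegprod : (∏ t ∈ Finset.range T, (X - C (Real.cos ((2*t+1)*π/(2*T))) : ℝ[X])).degree = (T:ℕ) := by
    rw [degree_prod, Finset.sum_congr rfl (fun t _ => degree_X_sub_C _)]
    simp
  have h2ne : ((2:ℝ)^(T-1)) ≠ 0 := by positivity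
  have hdg : g.degree = ((T:ℕ) : WithBot ℕ) := by
    rw [hg, degree_mul, degree_C h2ne, hdegprod, zero_add]
  have hlg : g.leadingCoeff = 2^(T-1) := by
    rw [hg, leadingCoeff_mul, leadingCoeff_C, hprodmonic.leadingCoeff]
    simp
  have hfne : f ≠ 0 := by
    intro h; rw [h, degree_zero] at hdf; exact absurd hdf.symm (by simp)
  have hdlt : (f - g).degree < ((T:ℕ) : WithBot ℕ) := by
    have := degree_sub_lt (hdf.trans hdg.symm) hfne (hlf.trans hlg.symm)
    rwa [hdf] at this
  have heval : ∀ t ∈ Finset.range T, (f - g).eval (Real.cos ((2*t+1)*π/(2*T))) = 0 := by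
    intro t ht
    rw [eval_sub]
    have h1 : f.eval (Real.cos ((2*t+1)*π/(2*T))) = 0 := by
      rw [hf, Polynomial.Chebyshev.T_real_cos, Real.cos_eq_zero_iff]
      refine ⟨t, ?_⟩
      have hTne : (T:ℝ) ≠ 0 := by positivity
      push_cast
      field_simp
    have h2 : g.eval (Real.cos ((2*t+1)*π/(2*T))) = 0 := by
      rw [hg, eval_mul, eval_prod, Finset.prod_eq_zero ht (by simp)]
      ring
    rw [h1, h2, sub_zero]
  have hzero : f - g = 0 := by
    apply Polynomial.eq_zero_of_degree_lt_of_eval_index_eq_zero (Finset.range T)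
      (cos_theta_injOn T hT)
    · simpa using hdlt
    · exact heval
  exact sub_eq_zero.mp hzero

lemma cheb_prod_eval (a b : ℝ) (ha : 0 < a) (hab : a < b) (T : ℕ) (hT : 1 ≤ T) (φ : ℝ) :
    ∏ t ∈ Finset.range T, (1 - chebStep a b T t * ((a+b)/2 + (b-a)/2 * Real.cos φ))
      = (-((b-a)/2))^T * Real.cos (T*φ) /
        ((2:ℝ)^(T-1) * ∏ t ∈ Finset.range T,
          ((a+b)/2 + (b-a)/2 * Real.cos ((2*t+1)*π/(2*T)))) := by
  have hρ : ∀ t : ℕ, 0 < (a+b)/2 + (b-a)/2 * Real.cos ((2*t+1)*π/(2*T)) := by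
    intro t
    have h1 : -1 ≤ Real.cos ((2*t+1)*π/(2*T)) := Real.neg_one_le_cos _
    nlinarith
  have hρne : ∀ t : ℕ, ((a+b)/2 + (b-a)/2 * Real.cos ((2*t+1)*π/(2*T))) ≠ 0 :=
    fun t => (hρ t).ne'
  have hfac := congrArg (Polynomial.eval (Real.cos φ)) (chebT_factor T hT)
  rw [Polynomial.Chebyshev.T_real_cos] at hfac
  simp only [Polynomial.eval_mul, Polynomial.eval_C, Polynomial.eval_prod,
    Polynomial.eval_sub, Polynomial.eval_X] at hfac
  have hfac' : Real.cos ((T:ℝ)*φ)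
      = 2^(T-1) * ∏ t ∈ Finset.range T,
          (Real.cos φ - Real.cos ((2*t+1)*π/(2*T))) := by exact_mod_cast hfac
  have hstep : ∀ t ∈ Finset.range T,
      (1 - chebStep a b T t * ((a+b)/2 + (b-a)/2 * Real.cos φ))
        = ((a+b)/2 + (b-a)/2 * Real.cos ((2*t+1)*π/(2*T)))⁻¹ *
          ((-((b-a)/2)) * (Real.cos φ - Real.cos ((2*t+1)*π/(2*T)))) := by
    intro t _
    rw [chebStep]
    rw [show (-((b-a)/2)) * (Real.cos φ - Real.cos ((2*t+1)*π/(2*T)))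
        = ((a+b)/2 + (b-a)/2 * Real.cos ((2*t+1)*π/(2*T)))
          - ((a+b)/2 + (b-a)/2 * Real.cos φ) by ring]
    rw [mul_sub, inv_mul_cancel₀ (hρne t)]
  rw [Finset.prod_congr rfl hstep, Finset.prod_mul_distrib, Finset.prod_inv_distrib,
    Finset.prod_mul_distrib, Finset.prod_const, Finset.card_range]
  rw [show ∏ t ∈ Finset.range T, (Real.cos φ - Real.cos ((2*t+1)*π/(2*T)))
      = Real.cos ((T:ℝ)*φ) / 2^(T-1) by
    rw [hfac', mul_div_cancel_left₀ _ (by positivity : (2:ℝ)^(T-1) ≠ 0)]]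
  have hD : (∏ t ∈ Finset.range T, ((a+b)/2 + (b-a)/2 * Real.cos ((2*t+1)*π/(2*T)))) ≠ 0 :=
    Finset.prod_ne_zero_iff.mpr (fun t _ => hρne t)
  have h2 : ((2:ℝ)^(T-1)) ≠ 0 := by positivity
  have key : ∀ (A B C D : ℝ), A ≠ 0 → C ≠ 0 → A⁻¹ * (D * (B / C)) = D * B / (C * A) := by
    intros A B C D hA hC
    rw [eq_div_iff (mul_ne_zero hC hA)]
    field_simp
  exact key _ _ _ _ hD h2

lemma sign_key (q p : ℝ) (h : |p| < |q|) : 0 < (q - p) * q := by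
  have h0 : 0 < |q| := lt_of_le_of_lt (abs_nonneg p) h
  have h1 : p * q ≤ |p| * |q| := le_trans (le_abs_self _) (le_of_eq (abs_mul _ _))
  have h2 : |p| * |q| < |q| * |q| := mul_lt_mul_of_pos_right h h0
  have h3 : |q| * |q| = q * q := abs_mul_abs_self q
  nlinarith

set_option maxHeartbeats 1000000 in
/-- The Chebyshev steps minimize `sup_{λ∈[a,b]} |∏_{t<T} (1 - γ_t λ)|` over all
choices of step sizes `γ_0, …, γ_{T-1}`. -/
theorem chebyshev_steps_minimize_sup (a b : ℝ) (ha : 0 < a) (hab : a < b)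
    (T : ℕ) (hT : 1 ≤ T) (γ : ℕ → ℝ) :
    sSup ((fun lam => |∏ t ∈ Finset.range T, (1 - chebStep a b T t * lam)|) '' Set.Icc a b) ≤
      sSup ((fun lam => |∏ t ∈ Finset.range T, (1 - γ t * lam)|) '' Set.Icc a b) := by
  have hπ := Real.pi_pos
  have hTR : (0:ℝ) < T := by exact_mod_cast hT
  have hTne : (T:ℝ) ≠ 0 := ne_of_gt hTR
  have hr : (0:ℝ) < (b-a)/2 := by linarith
  -- D and K
  have hρpos : ∀ t : ℕ, 0 < (a+b)/2 + (b-a)/2 * Real.cos ((2*t+1)*π/(2*T)) := by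
    intro t
    have h1 : -1 ≤ Real.cos ((2*t+1)*π/(2*T)) := Real.neg_one_le_cos _
    nlinarith
  set D := ∏ t ∈ Finset.range T, ((a+b)/2 + (b-a)/2 * Real.cos ((2*t+1)*π/(2*T))) with hDdef
  have hDpos : 0 < D := Finset.prod_pos (fun t _ => hρpos t)
  set K := (-((b-a)/2))^T / ((2:ℝ)^(T-1) * D) with hKdef
  have hKne : K ≠ 0 := by
    apply div_ne_zero
    · exact pow_ne_zero _ (by linarith)
    · positivity
  have hKval : ∀ φ : ℝ, ∏ t ∈ Finset.range T,
      (1 - chebStep a b T t * ((a+b)/2 + (b-a)/2 * Real.cos φ)) = K * Real.cos (T*φ) := by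
    intro φ
    rw [cheb_prod_eval a b ha hab T hT φ, hKdef, ← hDdef]
    rw [div_mul_eq_mul_div]
  -- alternation points
  set μ : ℕ → ℝ := fun i => (a+b)/2 + (b-a)/2 * Real.cos (i*π/T) with hμdef
  have hμval : ∀ i : ℕ, ∏ t ∈ Finset.range T, (1 - chebStep a b T t * μ i) = K * (-1)^i := by
    intro i
    have h1 : μ i = (a+b)/2 + (b-a)/2 * Real.cos ((i*π/T : ℝ)) := by simp only [hμdef]
    rw [h1, hKval (i*π/T)]
    have h2 : (T:ℝ) * (i*π/T) = i*π := by field_simp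
    rw [h2]
    congr 1
    simpa using Real.cos_nat_mul_pi_sub 0 i
  have hcos_mem : ∀ i : ℕ, i ≤ T → ((i:ℝ)*π/T) ∈ Set.Icc 0 π := by
    intro i hi
    constructor
    · positivity
    · rw [div_le_iff₀ hTR]
      have : (i:ℝ) ≤ T := by exact_mod_cast hi
      nlinarith
  have hμmem : ∀ i : ℕ, i ≤ T → μ i ∈ Set.Icc a b := by
    intro i hi
    have h1 : -1 ≤ Real.cos ((i:ℝ)*π/T) := Real.neg_one_le_cos _
    have h2 : Real.cos ((i:ℝ)*π/T) ≤ 1 := Real.cos_le_one _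
    simp only [hμdef]
    constructor <;> nlinarith
  have hμstrict : ∀ i j : ℕ, i < j → j ≤ T → μ j < μ i := by
    intro i j hij hj
    have hc := Real.strictAntiOn_cos (hcos_mem i (le_trans (le_of_lt hij) hj)) (hcos_mem j hj)
      (by
        rw [div_lt_div_iff₀ hTR hTR]
        have hcast : (i:ℝ) < j := by exact_mod_cast hij
        nlinarith [mul_pos (mul_pos (sub_pos.mpr hcast) hπ) hTR])
    simp only [hμdef] at hc ⊢
    nlinarith
  have hμmono : ∀ i j : ℕ, i ≤ j → j ≤ T → μ j ≤ μ i := by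
    intro i j hij hj
    rcases eq_or_lt_of_le hij with rfl | h
    · exact le_rfl
    · exact le_of_lt (hμstrict i j h hj)
  -- Q side bound
  have hQle : ∀ lam ∈ Set.Icc a b, |∏ t ∈ Finset.range T, (1 - chebStep a b T t * lam)| ≤ |K| := by
    intro lam hlam
    have hx1 : -1 ≤ (lam - (a+b)/2)/((b-a)/2) := by
      rw [neg_le, ← neg_div, div_le_one hr]; nlinarith [hlam.1]
    have hx2 : (lam - (a+b)/2)/((b-a)/2) ≤ 1 := by
      rw [div_le_one hr]; nlinarith [hlam.2]
    have hcos : Real.cos (Real.arccos ((lam - (a+b)/2)/((b-a)/2))) = (lam - (a+b)/2)/((b-a)/2) :=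
      Real.cos_arccos hx1 hx2
    have hlam' : lam = (a+b)/2 + (b-a)/2 * Real.cos (Real.arccos ((lam - (a+b)/2)/((b-a)/2))) := by
      rw [hcos]
      have hba : b - a ≠ 0 := by linarith
      field_simp
      ring
    rw [hlam', hKval, abs_mul]
    calc |K| * |Real.cos ((T:ℝ) * Real.arccos ((lam - (a+b)/2)/((b-a)/2)))|
        ≤ |K| * 1 := mul_le_mul_of_nonneg_left (Real.abs_cos_le_one _) (abs_nonneg K)
      _ = |K| := mul_one _
  -- P side
  set Pf := fun lam => |∏ t ∈ Finset.range T, (1 - γ t * lam)| with hPfdef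
  have hPcont : Continuous Pf := by
    apply Continuous.abs
    exact continuous_finset_prod _ (fun i _ => (continuous_const.sub (continuous_const.mul continuous_id)))
  have hPbdd : BddAbove (Pf '' Set.Icc a b) :=
    (isCompact_Icc.image_of_continuousOn hPcont.continuousOn).bddAbove
  have hPSup_le : ∀ lam ∈ Set.Icc a b, Pf lam ≤ sSup (Pf '' Set.Icc a b) :=
    fun lam h => le_csSup hPbdd ⟨lam, h, rfl⟩
  have hPSup_nonneg : 0 ≤ sSup (Pf '' Set.Icc a b) :=
    le_trans (abs_nonneg _) (hPSup_le a ⟨le_refl a, le_of_lt hab⟩)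
  -- main claim
  have hM : |K| ≤ sSup (Pf '' Set.Icc a b) := by
    by_contra hlt
    push_neg at hlt
    set Pq : Polynomial ℝ := ∏ t ∈ Finset.range T, (1 - Polynomial.C (γ t) * Polynomial.X) with hPq
    set Qq : Polynomial ℝ := ∏ t ∈ Finset.range T, (1 - Polynomial.C (chebStep a b T t) * Polynomial.X) with hQq
    have hPeval : ∀ lam, Pq.eval lam = ∏ t ∈ Finset.range T, (1 - γ t * lam) := by
      intro lam; rw [hPq]; simp [Polynomial.eval_prod]
    have hQeval : ∀ lam, Qq.eval lam = ∏ t ∈ Finset.range T, (1 - chebStep a b T t * lam) := by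
      intro lam; rw [hQq]; simp [Polynomial.eval_prod]
    set f := Qq - Pq with hf
    have hfacdeg : ∀ g : ℝ, (1 - Polynomial.C g * Polynomial.X : Polynomial ℝ).natDegree ≤ 1 := by
      intro g; compute_degree
    have hprodeg : ∀ (δ : ℕ → ℝ), (∏ t ∈ Finset.range T, (1 - Polynomial.C (δ t) * Polynomial.X) : Polynomial ℝ).natDegree ≤ T := by
      intro δ
      refine le_trans (Polynomial.natDegree_prod_le _ _) ?_
      calc ∑ t ∈ Finset.range T, (1 - Polynomial.C (δ t) * Polynomial.X : Polynomial ℝ).natDegree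
          ≤ ∑ t ∈ Finset.range T, 1 := Finset.sum_le_sum (fun i _ => hfacdeg (δ i))
        _ = T := by simp
    have hfdeg : f.natDegree ≤ T := by
      refine le_trans (Polynomial.natDegree_sub_le _ _) ?_
      exact max_le (hprodeg _) (hprodeg _)
    have hfe0 : f.eval 0 = 0 := by
      rw [hf, Polynomial.eval_sub, hPeval, hQeval]
      simp
    have halt : ∀ i : ℕ, i ≤ T → 0 < f.eval (μ i) * (K * (-1)^i) := by
      intro i hi
      have hq : Qq.eval (μ i) = K * (-1)^i := by rw [hQeval]; exact hμval i
      have hp : |Pq.eval (μ i)| < |K| := by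
        rw [hPeval]
        exact lt_of_le_of_lt (hPSup_le (μ i) (hμmem i hi)) hlt
      have habs : |Pq.eval (μ i)| < |K * (-1)^i| := by
        rw [abs_mul]; simpa using hp
      have := sign_key (K * (-1)^i) (Pq.eval (μ i)) habs
      rw [hf, Polynomial.eval_sub, hq]
      exact this
    -- roots via IVT
    have hroot : ∀ i, i < T → ∃ x ∈ Set.Ioo (μ (i+1)) (μ i), f.eval x = 0 := by
      intro i hi
      have h1 := halt i (le_of_lt hi)
      have h2 := halt (i+1) hi
      have hm : μ (i+1) < μ i := hμstrict i (i+1) (by omega) hi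
      have hcont : ContinuousOn (fun x => f.eval x) (Set.Icc (μ (i+1)) (μ i)) :=
        (Polynomial.continuous f).continuousOn
      have hsign : f.eval (μ i) * f.eval (μ (i+1)) < 0 := by
        have hps : (0:ℝ) < (f.eval (μ i) * (K * (-1)^i)) * (f.eval (μ (i+1)) * (K * (-1)^(i+1))) :=
          mul_pos h1 h2
        have hsq : ((-1:ℝ)^i)^2 = 1 := by
          rw [← pow_mul, mul_comm, pow_mul]; norm_num
        have he : (f.eval (μ i) * (K * (-1)^i)) * (f.eval (μ (i+1)) * (K * (-1)^(i+1)))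
            = -(f.eval (μ i) * f.eval (μ (i+1))) * K^2 * ((-1:ℝ)^i)^2 := by
          rw [pow_succ]; ring
        rw [he, hsq, mul_one] at hps
        by_contra hge
        push_neg at hge
        nlinarith [mul_nonneg hge (sq_nonneg K)]
      rcases lt_or_ge (f.eval (μ (i+1))) 0 with hneg | hpos
      · have hpos' : 0 < f.eval (μ i) := by nlinarith
        have : (0:ℝ) ∈ Set.Ioo (f.eval (μ (i+1))) (f.eval (μ i)) := ⟨hneg, hpos'⟩
        obtain ⟨x, hx, hfx⟩ := intermediate_value_Ioo (le_of_lt hm) hcont this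
        exact ⟨x, hx, hfx⟩
      · have hneg' : f.eval (μ i) < 0 := by nlinarith
        have hpos'' : 0 < f.eval (μ (i+1)) := by
          rcases lt_or_eq_of_le hpos with h | h
          · exact h
          · exfalso; rw [← h] at hsign; simp at hsign
        have : (0:ℝ) ∈ Set.Ioo (f.eval (μ i)) (f.eval (μ (i+1))) := ⟨hneg', hpos''⟩
        obtain ⟨x, hx, hfx⟩ := intermediate_value_Ioo' (le_of_lt hm) hcont this
        exact ⟨x, hx, hfx⟩
    choose! x hx1 hx2 using hroot
    have hxlt : ∀ i, i < T → μ (i+1) < x i ∧ x i < μ i := fun i hi => ⟨(hx1 i hi).1, (hx1 i hi).2⟩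
    -- the T+1 distinct points
    set v : ℕ → ℝ := fun i => if i = 0 then 0 else x (i-1) with hvdef
    have hxpos : ∀ i, i < T → 0 < x i := by
      intro i hi
      have := (hxlt i hi).1
      have hge : a ≤ μ (i+1) := (hμmem (i+1) hi).1
      linarith
    have hxord : ∀ i j, i < j → j < T → x j < x i := by
      intro i j hij hj
      have h1 : x j < μ j := (hxlt j hj).2
      have h2 : μ j ≤ μ (i+1) := hμmono (i+1) j (by omega) (le_of_lt hj)
      have h3 : μ (i+1) < x i := (hxlt i (lt_of_le_of_lt (by omega : i ≤ j - 1) (by omega))).1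
      linarith
    have hvne : ∀ i j, i < j → j < T+1 → v i ≠ v j := by
      intro i j hij hj
      simp only [hvdef]
      rcases Nat.eq_zero_or_pos i with rfl | hi
      · simp only [if_pos rfl, if_neg (by omega : j ≠ 0)]
        exact ne_of_lt (hxpos (j-1) (by omega))
      · simp only [if_neg (by omega : i ≠ 0), if_neg (by omega : j ≠ 0)]
        exact ne_of_gt (hxord (i-1) (j-1) (by omega) (by omega))
    have hinj : Set.InjOn v (Finset.range (T+1)) := by
      intro i hi j hj hvij
      simp only [Finset.coe_range, Set.mem_Iio] at hi hj
      rcases Nat.lt_trichotomy i j with h | h | h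
      · exact absurd hvij (hvne i j h hj)
      · exact h
      · exact absurd hvij.symm (hvne j i h hi)
    have hveval : ∀ i ∈ Finset.range (T+1), f.eval (v i) = 0 := by
      intro i hi
      simp only [Finset.mem_range] at hi
      simp only [hvdef]
      rcases Nat.eq_zero_or_pos i with rfl | hipos
      · simpa using hfe0
      · simp only [if_neg (by omega : i ≠ 0)]
        exact hx2 (i-1) (by omega)
    have hfzero : f = 0 := by
      apply Polynomial.eq_zero_of_degree_lt_of_eval_index_eq_zero (Finset.range (T+1)) hinj
      · rw [Finset.card_range]
        calc f.degree ≤ (f.natDegree : WithBot ℕ) := Polynomial.degree_le_natDegree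
          _ ≤ (T : WithBot ℕ) := by exact_mod_cast hfdeg
          _ < ((T+1 : ℕ) : WithBot ℕ) := by exact_mod_cast Nat.lt_succ_self T
      · exact hveval
    have hPQ : Pq = Qq := (sub_eq_zero.mp hfzero).symm
    have hcontr : Pf (μ 0) = |K| := by
      simp only [hPfdef]
      rw [← hPeval, hPQ, hQeval, hμval 0]
      simp
    have := hPSup_le (μ 0) (hμmem 0 (by omega))
    rw [hcontr] at this
    linarith
  -- conclude
  apply Real.sSup_le
  · rintro y ⟨lam, hlam, rfl⟩
    exact le_trans (hQle lam hlam) hM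
  · exact hPSup_nonneg
end

section
/- Let 0 < a < b be real numbers and let T ≥ 1 be an integer. For every real z, ∏_{t=0}^{T−1}(1 − γ_t^{ch} z) = C_T((2z − a − b)/(b − a)) / C_T(−(a+b)/(b−a)), where C_T is the Chebyshev polynomial of the first kind of degree T and γ_t^{ch} are the Chebyshev steps of length T on [a,b]. In particular C_T(−(a+b)/(b−a)) ≠ 0. -/
open Polynomial

lemma cheb_natDegree_le (n : ℕ) : (Polynomial.Chebyshev.T ℝ (n : ℤ)).natDegree ≤ n := by
  induction n using Nat.strong_induction_on with
  | _ n ih =>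
    match n with
    | 0 => simp [Polynomial.Chebyshev.T_zero]
    | 1 => simp [Polynomial.Chebyshev.T_one]
    | (k+2) =>
      have h : Polynomial.Chebyshev.T ℝ ((k:ℤ)+2) =
          2 * X * Polynomial.Chebyshev.T ℝ ((k:ℤ)+1) - Polynomial.Chebyshev.T ℝ k :=
        Polynomial.Chebyshev.T_add_two ℝ k
      push_cast
      rw [h]
      refine (natDegree_sub_le _ _).trans (max_le ?_ ?_)
      · refine (natDegree_mul_le).trans ?_
        have h1 := ih (k+1) (by omega)
        have h2 : (2 * X : ℝ[X]).natDegree ≤ 1 := by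
          simpa using natDegree_C_mul_le (2:ℝ) X
        push_cast at h1
        omega
      · exact (ih k (by omega)).trans (by omega)

lemma cheb_coeff_top (n : ℕ) (hn : 1 ≤ n) :
    (Polynomial.Chebyshev.T ℝ (n : ℤ)).coeff n = 2 ^ (n - 1) := by
  induction n using Nat.strong_induction_on with
  | _ n ih =>
    match n with
    | 1 => simp [Polynomial.Chebyshev.T_one]
    | (k+2) =>
      have h : Polynomial.Chebyshev.T ℝ ((k:ℤ)+2) =
          2 * X * Polynomial.Chebyshev.T ℝ ((k:ℤ)+1) - Polynomial.Chebyshev.T ℝ k :=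
        Polynomial.Chebyshev.T_add_two ℝ k
      push_cast
      rw [h]
      rw [coeff_sub, coeff_eq_zero_of_natDegree_lt (lt_of_le_of_lt (cheb_natDegree_le k) (by omega))]
      have : (2 * X * Polynomial.Chebyshev.T ℝ ((k:ℤ)+1)) =
          Polynomial.C 2 * (X * Polynomial.Chebyshev.T ℝ ((k:ℤ)+1)) := by
        rw [show (2:ℝ[X]) = Polynomial.C 2 from (map_ofNat Polynomial.C 2).symm]; ring
      rw [this, coeff_C_mul, coeff_X_mul]
      have hk : ((k:ℤ)+1) = ((k+1 : ℕ) : ℤ) := by push_cast; ring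
      rw [hk, ih (k+1) (by omega) (by omega)]
      simp
      ring

lemma cheb_eval_prod (T : ℕ) (hT : 1 ≤ T) (y : ℝ) :
    (Polynomial.Chebyshev.T ℝ (T : ℤ)).eval y =
      2 ^ (T - 1) * ∏ t ∈ Finset.range T, (y - Real.cos ((2 * t + 1) * Real.pi / (2 * T))) := by
  have hTpos : 0 < (T : ℝ) := by positivity
  have hpi := Real.pi_pos
  set r : ℕ → ℝ := fun t => Real.cos ((2 * t + 1) * Real.pi / (2 * T)) with hr
  set q : ℝ[X] := C ((2:ℝ) ^ (T - 1)) * ∏ t ∈ Finset.range T, (X - C (r t)) with hq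
  have hmon : (∏ t ∈ Finset.range T, (X - C (r t))).Monic :=
    monic_prod_of_monic _ _ fun _ _ => monic_X_sub_C _
  have hdq : (∏ t ∈ Finset.range T, (X - C (r t))).natDegree = T := by
    rw [natDegree_prod_of_monic _ _ fun _ _ => monic_X_sub_C _]
    simp
  have key : Polynomial.Chebyshev.T ℝ (T : ℤ) - q = 0 := by
    apply Polynomial.eq_zero_of_degree_lt_of_eval_index_eq_zero (Finset.range T) (v := r)
    · -- InjOn
      intro s hs t ht h
      simp only [Finset.coe_range, Set.mem_Iio] at hs ht
      have hmem : ∀ u : ℕ, u < T → (2 * (u:ℝ) + 1) * Real.pi / (2 * T) ∈ Set.Icc 0 Real.pi := by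
        intro u hu
        constructor
        · positivity
        · rw [div_le_iff₀ (by positivity)]
          have : (2 * (u:ℝ) + 1) ≤ 2 * T := by
            have : (u:ℝ) + 1 ≤ T := by exact_mod_cast hu
            linarith
          nlinarith
      have heq := Real.injOn_cos (hmem s hs) (hmem t ht) h
      field_simp at heq
      have h' : (s:ℝ) = t := by linarith
      exact_mod_cast h'
    · -- degree lt
      rw [Finset.card_range]
      rw [degree_lt_iff_coeff_zero]
      intro m hm
      have hm' : T ≤ m := by exact_mod_cast hm
      rw [coeff_sub, hq, coeff_C_mul]
      rcases eq_or_lt_of_le hm' with h | hlt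
      · subst h
        rw [cheb_coeff_top T hT]
        have h1 := hmon.coeff_natDegree
        rw [hdq] at h1
        rw [h1]
        ring
      · rw [coeff_eq_zero_of_natDegree_lt (lt_of_le_of_lt (cheb_natDegree_le T) hlt),
          coeff_eq_zero_of_natDegree_lt (show (∏ t ∈ Finset.range T, (X - C (r t))).natDegree < m by rw [hdq]; exact hlt)]
        ring
    · -- evals
      intro t ht
      rw [eval_sub, hq, eval_mul, eval_prod]
      rw [Finset.prod_eq_zero ht (by simp [hr])]
      have : (Polynomial.Chebyshev.T ℝ (T : ℤ)).eval (r t) =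
          Real.cos ((T:ℤ) * ((2 * t + 1) * Real.pi / (2 * T))) :=
        Polynomial.Chebyshev.T_real_cos _ _
      rw [this]
      have harg : ((T:ℤ):ℝ) * ((2 * t + 1) * Real.pi / (2 * T)) = t * Real.pi + Real.pi / 2 := by
        push_cast
        field_simp
      rw [harg, Real.cos_add, Real.cos_pi_div_two, Real.sin_pi_div_two, Real.sin_nat_mul_pi]
      ring
  have hpq : Polynomial.Chebyshev.T ℝ (T : ℤ) = q := by
    have := sub_eq_zero.mp key
    exact this
  rw [hpq, hq, eval_mul, eval_prod]
  simp
  rfl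



/-- `∏_{t<T} (1 - γ_t^{ch} z) = C_T((2z-a-b)/(b-a)) / C_T(-(a+b)/(b-a))`, where `C_T`
is the Chebyshev polynomial of the first kind of degree `T`; in particular the
denominator is nonzero. -/
theorem prod_chebStep_eq_chebyshevT (a b : ℝ) (ha : 0 < a) (hab : a < b)
    (T : ℕ) (hT : 1 ≤ T) :
    (Polynomial.Chebyshev.T ℝ T).eval (-(a + b) / (b - a)) ≠ 0 ∧
      ∀ z : ℝ, ∏ t ∈ Finset.range T, (1 - chebStep a b T t * z) =
        (Polynomial.Chebyshev.T ℝ T).eval ((2 * z - a - b) / (b - a)) /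
          (Polynomial.Chebyshev.T ℝ T).eval (-(a + b) / (b - a)) := by
  have hd : (0:ℝ) < b - a := by linarith
  set r : ℕ → ℝ := fun t => Real.cos ((2 * t + 1) * Real.pi / (2 * T)) with hr
  set g : ℕ → ℝ := fun t => (a + b) / 2 + ((b - a) / 2) * r t with hg
  have hgpos : ∀ t, 0 < g t := by
    intro t
    have h1 : -1 ≤ r t := Real.neg_one_le_cos _
    simp only [hg]
    nlinarith
  have hfac : ∀ t, -(a + b) / (b - a) - r t = -(2 / (b - a)) * g t := by
    intro t
    simp only [hg, hr]
    field_simp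
    ring
  have hfacne : ∀ t, -(a + b) / (b - a) - r t ≠ 0 := fun t => by
    rw [hfac t]
    exact mul_ne_zero (neg_ne_zero.mpr (div_ne_zero two_ne_zero hd.ne')) (hgpos t).ne'
  have hprodne : ∏ t ∈ Finset.range T, (-(a + b) / (b - a) - r t) ≠ 0 :=
    Finset.prod_ne_zero_iff.mpr fun t _ => hfacne t
  have hpow : (2:ℝ) ^ (T - 1) ≠ 0 := by positivity
  have hden : (Polynomial.Chebyshev.T ℝ T).eval (-(a + b) / (b - a)) =
      2 ^ (T - 1) * ∏ t ∈ Finset.range T, (-(a + b) / (b - a) - r t) :=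
    cheb_eval_prod T hT _
  constructor
  · rw [hden]
    exact mul_ne_zero hpow hprodne
  · intro z
    rw [hden, cheb_eval_prod T hT, mul_div_mul_left _ _ hpow, ← Finset.prod_div_distrib]
    refine Finset.prod_congr rfl fun t _ => ?_
    have hstep : chebStep a b T t = (g t)⁻¹ := rfl
    have hgne : g t ≠ 0 := (hgpos t).ne'
    rw [hstep, hfac t, eq_div_iff (mul_ne_zero (neg_ne_zero.mpr (div_ne_zero two_ne_zero hd.ne'))
      hgne)]
    have expand : (1 - (g t)⁻¹ * z) * (-(2 / (b - a)) * g t)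
        = -(2 / (b - a)) * g t + (2 / (b - a)) * z := by
      field_simp
      ring
    rw [expand]
    simp only [hg, hr]
    field_simp
    ring
end

section
/- Let 0 < a < b be real numbers, let κ := b/a, and let T ≥ 1 be an integer. Then the supremum over λ ∈ [a,b] of |∏_{t=0}^{T−1}(1 − γ_t^{ch} λ)| equals sech(T · arcosh((κ+1)/(κ−1))), where γ_t^{ch} are the Chebyshev steps of length T on [a,b]. -/
/-- The inverse hyperbolic cosine on `[1, ∞)`. -/
noncomputable def arcosh (x : ℝ) : ℝ := Real.log (x + Real.sqrt (x ^ 2 - 1))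

noncomputable def chebAngle (T t : ℕ) : ℝ := (2 * t + 1) * Real.pi / (2 * T)

lemma prod_sub_pow_eq {m : ℕ} (hm : 0 < m) {ζ : ℂ} (h : IsPrimitiveRoot ζ m) (v : ℂ) :
    ∏ s ∈ Finset.range m, (v - ζ ^ s) = v ^ m - 1 := by
  haveI : NeZero m := ⟨hm.ne'⟩
  have h1 := congrArg (Polynomial.eval v) (Polynomial.X_pow_sub_one_eq_prod hm h)
  simp only [Polynomial.eval_sub, Polynomial.eval_pow, Polynomial.eval_X, Polynomial.eval_one,
    Polynomial.eval_prod, Polynomial.eval_C] at h1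
  rw [h1]
  have hset : Polynomial.nthRootsFinset m (1 : ℂ) = (Finset.range m).image (ζ ^ ·) := by
    ext x
    simp only [Finset.mem_image, Finset.mem_range, Polynomial.mem_nthRootsFinset hm (1 : ℂ)]
    constructor
    · intro hx
      obtain ⟨i, hi, rfl⟩ := h.eq_pow_of_pow_eq_one hx
      exact ⟨i, hi, rfl⟩
    · rintro ⟨i, hi, rfl⟩
      rw [← pow_mul, mul_comm, pow_mul, h.pow_eq_one, one_pow]
  rw [hset, Finset.prod_image (fun i hi j hj hij =>
    h.pow_inj (Finset.mem_range.mp hi) (Finset.mem_range.mp hj) hij)]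

lemma prod_two_cos_complex (n : ℕ) (hn : 0 < n) (z : ℂ) :
    ∏ t ∈ Finset.range n,
        (2 * Complex.cos z - 2 * Complex.cos ((2 * (t : ℂ) + 1) * (Real.pi : ℂ) / (2 * (n : ℂ)))) =
      2 * Complex.cos ((n : ℂ) * z) := by
  have hn' : (n : ℂ) ≠ 0 := Nat.cast_ne_zero.mpr hn.ne'
  set ε : ℂ := Complex.exp ((Real.pi : ℂ) * Complex.I / (2 * (n : ℂ))) with hεdef
  set w : ℂ := Complex.exp (z * Complex.I) with hwdef
  have hw : w ≠ 0 := Complex.exp_ne_zero _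
  have hε : ε ≠ 0 := Complex.exp_ne_zero _
  have hεpow : ∀ k : ℕ, Complex.exp ((k : ℂ) * ((Real.pi : ℂ) * Complex.I / (2 * (n : ℂ)))) = ε ^ k := by
    intro k; rw [Complex.exp_nat_mul, hεdef]
  have hε2n : ε ^ (2 * n) = -1 := by
    rw [← hεpow]
    rw [show ((2 * n : ℕ) : ℂ) * ((Real.pi : ℂ) * Complex.I / (2 * (n : ℂ)))
        = (Real.pi : ℂ) * Complex.I by push_cast; field_simp]
    exact Complex.exp_pi_mul_I
  have hε4n : ε ^ (4 * n) = 1 := by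
    rw [show 4 * n = 2 * n * 2 by ring, pow_mul, hε2n]; norm_num
  -- each factor
  have hterm : ∀ t ∈ Finset.range n,
      2 * Complex.cos z - 2 * Complex.cos ((2 * (t : ℂ) + 1) * (Real.pi : ℂ) / (2 * (n : ℂ)))
        = (w - ε ^ (2 * t + 1)) * (w - (ε ^ (2 * t + 1))⁻¹) / w := by
    intro t _
    have hcz : 2 * Complex.cos z = w + w⁻¹ := by
      rw [Complex.two_cos, hwdef, neg_mul, Complex.exp_neg]
    have hct : 2 * Complex.cos ((2 * (t : ℂ) + 1) * (Real.pi : ℂ) / (2 * (n : ℂ)))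
        = ε ^ (2 * t + 1) + (ε ^ (2 * t + 1))⁻¹ := by
      rw [Complex.two_cos, neg_mul, Complex.exp_neg,
        show ((2 * (t : ℂ) + 1) * (Real.pi : ℂ) / (2 * (n : ℂ))) * Complex.I
          = ((2 * t + 1 : ℕ) : ℂ) * ((Real.pi : ℂ) * Complex.I / (2 * (n : ℂ))) by push_cast; ring,
        hεpow]
    rw [hcz, hct]
    have hη : ε ^ (2 * t + 1) ≠ 0 := pow_ne_zero _ hε
    field_simp
    ring
  rw [Finset.prod_congr rfl hterm, Finset.prod_div_distrib, Finset.prod_const, Finset.card_range]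
  -- the numerator product
  have hprim : IsPrimitiveRoot (ε ^ 2) (2 * n) := by
    have h1 := Complex.isPrimitiveRoot_exp (2 * n) (by omega)
    have h2 : Complex.exp (2 * (Real.pi : ℂ) * Complex.I / ((2 * n : ℕ) : ℂ)) = ε ^ 2 := by
      rw [← hεpow 2]
      congr 1; push_cast; ring
    rwa [h2] at h1
  have hB : ∏ t ∈ Finset.range n, (w - (ε ^ (2 * t + 1))⁻¹)
      = ∏ t ∈ Finset.range n, (w - ε ^ (2 * (n + t) + 1)) := by
    rw [← Finset.prod_range_reflect (fun t => w - ε ^ (2 * (n + t) + 1)) n]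
    apply Finset.prod_congr rfl
    intro j hj
    rw [Finset.mem_range] at hj
    congr 1
    have hexp : 2 * (n + (n - 1 - j)) + 1 + (2 * j + 1) = 4 * n := by omega
    have hmul : ε ^ (2 * (n + (n - 1 - j)) + 1) * ε ^ (2 * j + 1) = 1 := by
      rw [← pow_add, hexp, hε4n]
    exact (eq_inv_of_mul_eq_one_left hmul).symm
  have hAB : ∏ t ∈ Finset.range n, ((w - ε ^ (2 * t + 1)) * (w - (ε ^ (2 * t + 1))⁻¹))
      = w ^ (2 * n) + 1 := by
    rw [Finset.prod_mul_distrib, hB, ← Finset.prod_range_add (fun t => w - ε ^ (2 * t + 1)) n n]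
    have hstep : ∀ t : ℕ, ε ^ (2 * t + 1) = ε * (ε ^ 2) ^ t := by
      intro t; rw [pow_succ, ← pow_mul]; ring
    calc ∏ t ∈ Finset.range (n + n), (w - ε ^ (2 * t + 1))
        = ∏ t ∈ Finset.range (n + n), (ε * (w / ε - (ε ^ 2) ^ t)) := by
          apply Finset.prod_congr rfl
          intro t _
          rw [hstep]
          field_simp
      _ = ε ^ (n + n) * ((w / ε) ^ (2 * n) - 1) := by
          rw [Finset.prod_mul_distrib, Finset.prod_const, Finset.card_range,
            show n + n = 2 * n by ring, prod_sub_pow_eq (by omega) hprim]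
      _ = w ^ (2 * n) + 1 := by
          rw [show n + n = 2 * n by ring, hε2n, div_pow, hε2n]
          ring
  rw [hAB]
  have hwn : Complex.exp (((n : ℂ) * z) * Complex.I) = w ^ n := by
    rw [hwdef, ← Complex.exp_nat_mul]; congr 1; ring
  rw [Complex.two_cos, neg_mul, Complex.exp_neg, hwn]
  rw [show 2 * n = n * 2 by ring, pow_mul]
  field_simp

lemma prod_two_cos_real (n : ℕ) (hn : 0 < n) (φ : ℝ) :
    ∏ t ∈ Finset.range n, (2 * Real.cos φ - 2 * Real.cos (chebAngle n t)) =
      2 * Real.cos ((n : ℝ) * φ) := by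
  have h2 := prod_two_cos_complex n hn (φ : ℂ)
  unfold chebAngle
  exact_mod_cast h2

lemma prod_two_cosh_real (n : ℕ) (hn : 0 < n) (s : ℝ) :
    ∏ t ∈ Finset.range n, (2 * Real.cosh s - 2 * Real.cos (chebAngle n t)) =
      2 * Real.cosh ((n : ℝ) * s) := by
  have h2 := prod_two_cos_complex n hn ((s : ℂ) * Complex.I)
  rw [Complex.cos_mul_I,
    show (n : ℂ) * ((s : ℂ) * Complex.I) = (((n * s : ℝ) : ℂ)) * Complex.I by push_cast; ring,
    Complex.cos_mul_I] at h2
  unfold chebAngle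
  exact_mod_cast h2

/-- `sup_{λ∈[a,b]} |∏_{t<T} (1 - γ_t^{ch} λ)| = sech(T · arcosh((κ+1)/(κ-1)))`
where `κ = b/a`. -/
theorem sup_prod_chebStep_eq_sech (a b : ℝ) (ha : 0 < a) (hab : a < b)
    (κ : ℝ) (hκ : κ = b / a) (T : ℕ) (hT : 1 ≤ T) :
    sSup ((fun lam => |∏ t ∈ Finset.range T, (1 - chebStep a b T t * lam)|) '' Set.Icc a b) =
      (Real.cosh (T * arcosh ((κ + 1) / (κ - 1))))⁻¹ := by
  have hb : 0 < b := ha.trans hab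
  have hba : 0 < b - a := sub_pos.mpr hab
  have hTpos : 0 < T := hT
  set x0 : ℝ := (a + b) / (b - a) with hx0def
  have hx0 : 1 < x0 := by rw [hx0def, lt_div_iff₀ hba]; linarith
  have hκx : (κ + 1) / (κ - 1) = x0 := by
    have hκ1 : κ - 1 ≠ 0 := by
      rw [hκ]
      have : (1:ℝ) < b / a := (one_lt_div ha).mpr hab
      intro hc
      rw [sub_eq_zero] at hc
      linarith
    rw [hκ] at hκ1 ⊢
    rw [hx0def]
    field_simp at hκ1 ⊢
    ring
  set s0 : ℝ := arcosh x0 with hs0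
  have hq : Real.sqrt (x0 ^ 2 - 1) ^ 2 = x0 ^ 2 - 1 := Real.sq_sqrt (by nlinarith)
  have hqnn : 0 ≤ Real.sqrt (x0 ^ 2 - 1) := Real.sqrt_nonneg _
  have hy : 0 < x0 + Real.sqrt (x0 ^ 2 - 1) := by linarith
  have hcosh : Real.cosh s0 = x0 := by
    rw [hs0, arcosh, Real.cosh_eq, Real.exp_log hy, Real.exp_neg, Real.exp_log hy]
    have hmul : (x0 + Real.sqrt (x0 ^ 2 - 1)) * (x0 - Real.sqrt (x0 ^ 2 - 1)) = 1 := by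
      nlinarith [hq]
    rw [inv_eq_of_mul_eq_one_right hmul]
    ring
  have hchp : (0:ℝ) < Real.cosh ((T : ℝ) * s0) := Real.cosh_pos _
  -- node denominators
  set d : ℕ → ℝ := fun t => (a + b) / 2 + (b - a) / 2 * Real.cos (chebAngle T t) with hddef
  have hdpos : ∀ t, 0 < d t := by
    intro t
    have h1 := Real.neg_one_le_cos (chebAngle T t)
    have h2 := Real.cos_le_one (chebAngle T t)
    simp only [hddef]
    nlinarith
  have hcheb : ∀ t, chebStep a b T t = (d t)⁻¹ := fun t => rfl
  have hT0 : ((T:ℝ)) ≠ 0 := Nat.cast_ne_zero.mpr hTpos.ne'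
  -- reflection of angles
  have hrefl : ∀ t < T, Real.cos (chebAngle T (T - 1 - t)) = - Real.cos (chebAngle T t) := by
    intro t ht
    have hcast : ((T - 1 - t : ℕ) : ℝ) = (T : ℝ) - 1 - (t : ℝ) := by
      have h1 : (T - 1 - t : ℕ) = T - (t + 1) := by omega
      rw [h1, Nat.cast_sub (by omega : t + 1 ≤ T)]
      push_cast
      ring
    have hang : chebAngle T (T - 1 - t) = Real.pi - chebAngle T t := by
      unfold chebAngle
      rw [hcast]
      field_simp
      ring
    rw [hang, Real.cos_pi_sub]
  -- product of denominators
  have hprodd : ∏ t ∈ Finset.range T, d t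
      = ((b - a) / 4) ^ T * (2 * Real.cosh ((T : ℝ) * s0)) := by
    have hterm : ∀ t ∈ Finset.range T,
        d t = ((b - a) / 4) * (2 * Real.cosh s0 + 2 * Real.cos (chebAngle T t)) := by
      intro t _
      simp only [hddef, hcosh, hx0def]
      field_simp
      ring
    rw [Finset.prod_congr rfl hterm, Finset.prod_mul_distrib, Finset.prod_const,
      Finset.card_range]
    congr 1
    calc ∏ t ∈ Finset.range T, (2 * Real.cosh s0 + 2 * Real.cos (chebAngle T t))
        = ∏ t ∈ Finset.range T, (2 * Real.cosh s0 - 2 * Real.cos (chebAngle T (T - 1 - t))) := by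
          apply Finset.prod_congr rfl
          intro t ht
          rw [hrefl t (Finset.mem_range.mp ht)]
          ring
      _ = ∏ t ∈ Finset.range T, (2 * Real.cosh s0 - 2 * Real.cos (chebAngle T t)) :=
          Finset.prod_range_reflect (fun t => 2 * Real.cosh s0 - 2 * Real.cos (chebAngle T t)) T
      _ = 2 * Real.cosh ((T : ℝ) * s0) := prod_two_cosh_real T hTpos s0
  -- pointwise formula
  have hmain : ∀ lam ∈ Set.Icc a b,
      |∏ t ∈ Finset.range T, (1 - chebStep a b T t * lam)| =
        |Real.cos ((T : ℝ) * Real.arccos ((2 * lam - (a + b)) / (b - a)))|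
          / Real.cosh ((T : ℝ) * s0) := by
    rintro lam ⟨hla, hlb⟩
    set u : ℝ := (2 * lam - (a + b)) / (b - a) with hudef
    have hu1 : -1 ≤ u := by rw [hudef, le_div_iff₀ hba]; linarith
    have hu2 : u ≤ 1 := by rw [hudef, div_le_one hba]; linarith
    set φ : ℝ := Real.arccos u with hφdef
    have hcosφ : Real.cos φ = u := Real.cos_arccos hu1 hu2
    have hnum : ∏ t ∈ Finset.range T, (d t - lam)
        = (-((b - a) / 4)) ^ T * (2 * Real.cos ((T : ℝ) * φ)) := by
      have hterm : ∀ t ∈ Finset.range T,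
          d t - lam = (-((b - a) / 4)) * (2 * Real.cos φ - 2 * Real.cos (chebAngle T t)) := by
        intro t _
        simp only [hddef, hcosφ, hudef]
        field_simp
        ring
      rw [Finset.prod_congr rfl hterm, Finset.prod_mul_distrib, Finset.prod_const,
        Finset.card_range, prod_two_cos_real T hTpos φ]
    have hfrac : ∀ t ∈ Finset.range T,
        1 - chebStep a b T t * lam = (d t - lam) / d t := by
      intro t _
      rw [hcheb t]
      field_simp [(hdpos t).ne']
    rw [Finset.prod_congr rfl hfrac, Finset.prod_div_distrib, hnum, hprodd]
    have hq4 : (0:ℝ) < (b - a) / 4 := by linarith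
    rw [abs_div, abs_of_pos (show (0:ℝ) < ((b - a) / 4) ^ T * (2 * Real.cosh ((T : ℝ) * s0))
        by positivity)]
    rw [abs_mul, abs_pow, abs_neg, abs_of_pos hq4, abs_mul, abs_two]
    rw [mul_div_mul_left _ _ (by positivity : ((b - a) / 4) ^ T ≠ 0)]
    rw [mul_div_mul_left _ _ (two_ne_zero)]
  -- conclude
  rw [hκx, ← hs0]
  apply IsGreatest.csSup_eq
  constructor
  · refine ⟨a, Set.left_mem_Icc.mpr hab.le, ?_⟩
    simp only
    rw [hmain a (Set.left_mem_Icc.mpr hab.le)]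
    have hua : (2 * a - (a + b)) / (b - a) = -1 := by
      rw [div_eq_iff hba.ne']; ring
    rw [hua, Real.arccos_neg_one]
    have : |Real.cos ((T : ℝ) * Real.pi)| = 1 := by
      have := Real.abs_cos_int_mul_pi (T : ℤ)
      push_cast at this
      exact this
    rw [this, one_div]
  · rintro y ⟨lam, hlam, rfl⟩
    simp only
    rw [hmain lam hlam, ← one_div]
    gcongr
    exact Real.abs_cos_le_one _
end

section
/- Let A be an n×n Hermitian positive definite complex matrix whose minimum eigenvalue λ_1 and maximum eigenvalue λ_n satisfy 0 < λ_1 < λ_n, let κ := λ_n/λ_1, and let T ≥ 1 be an integer. Let γ_t^{ch} (t = 0,…,T−1) be the Chebyshev steps of length T on [λ_1, λ_n]. Then for every vector x ∈ ℂ^n, ‖∏_{t=0}^{T−1}(I_n − γ_t^{ch} A) · x‖₂ ≤ sech(T · arcosh((κ+1)/(κ−1))) · ‖x‖₂. -/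
set_option maxHeartbeats 1000000

open Complex in
lemma prod_quadratic' (T : ℕ) (hT : 1 ≤ T) (z : ℂ) :
    ∏ k ∈ Finset.range (2 * T),
      (z - Complex.exp ((((2 * k + 1) * Real.pi / (2 * T) : ℝ)) * I)) = z ^ (2 * T) + 1 := by
  have hT0 : (0:ℕ) < 2 * T := by omega
  have hc : (2 * T : ℂ) ≠ 0 := by
    have : (T:ℂ) ≠ 0 := Nat.cast_ne_zero.2 (by omega)
    simpa using this
  have hζ : IsPrimitiveRoot (Complex.exp (2 * ↑Real.pi * I / (2 * T))) (2 * T) := by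
    have := Complex.isPrimitiveRoot_exp (2*T) (by omega)
    convert this using 3
    push_cast
    ring
  have he : (Complex.exp (↑Real.pi * I / (2 * T))) ^ (2 * T) = -1 := by
    rw [← Complex.exp_nat_mul]
    rw [show ((2 * T : ℕ) : ℂ) * (↑Real.pi * I / (2 * T)) = ↑Real.pi * I by
      push_cast; field_simp; exact div_self (Nat.cast_ne_zero.2 (by omega))]
    exact Complex.exp_pi_mul_I
  have h2 := congrArg (Polynomial.eval z) (X_pow_sub_C_eq_prod hζ hT0 he)
  simp only [Polynomial.eval_sub, Polynomial.eval_pow, Polynomial.eval_X, Polynomial.eval_C,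
    Polynomial.eval_prod] at h2
  rw [sub_neg_eq_add] at h2
  rw [h2]
  refine (Finset.prod_congr rfl fun k hk => ?_).symm
  congr 1
  rw [← Complex.exp_nat_mul, ← Complex.exp_add]
  congr 1
  push_cast
  field_simp

open Complex in
lemma prod_cheb_core (T : ℕ) (hT : 1 ≤ T) (z : ℂ) (hz : z ≠ 0) :
    ∏ t ∈ Finset.range T, (z + z⁻¹ - 2 * Complex.cos (((2 * t + 1) * Real.pi / (2 * T) : ℝ)))
      = z ^ T + (z ^ T)⁻¹ := by
  have hquad : ∏ k ∈ Finset.range (2 * T),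
      (z - Complex.exp ((((2 * k + 1) * Real.pi / (2 * T) : ℝ)) * I)) = z ^ (2 * T) + 1 :=
    prod_quadratic' T hT z
  set f : ℕ → ℂ := fun k => z - Complex.exp ((((2 * k + 1) * Real.pi / (2 * T) : ℝ)) * I) with hf
  have hTR : (T : ℝ) ≠ 0 := Nat.cast_ne_zero.2 (by omega)
  have key : ∀ θ : ℝ, (z - Complex.exp ((θ : ℂ) * I)) * (z - (Complex.exp ((θ : ℂ) * I))⁻¹)
      = z * (z + z⁻¹ - 2 * Complex.cos (θ : ℂ)) := by
    intro θ
    have he : Complex.exp ((θ : ℂ) * I) ≠ 0 := Complex.exp_ne_zero _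
    have hsum : Complex.exp ((θ : ℂ) * I) + (Complex.exp ((θ : ℂ) * I))⁻¹
        = 2 * Complex.cos (θ : ℂ) := by
      rw [← Complex.exp_neg, ← neg_mul, Complex.exp_mul_I, Complex.exp_mul_I]
      simp only [Complex.cos_neg, Complex.sin_neg]
      ring
    rw [← hsum]
    field_simp
    ring
  have h1 : ∏ k ∈ Finset.range (2 * T), f k
      = (∏ k ∈ Finset.range T, f k) * ∏ k ∈ Finset.range T, f (T + k) := by
    rw [two_mul]; exact Finset.prod_range_add f T T
  have h2 : ∏ k ∈ Finset.range T, f (T + k) = ∏ k ∈ Finset.range T, f (2 * T - 1 - k) := by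
    rw [← Finset.prod_range_reflect (fun k => f (T + k)) T]
    refine Finset.prod_congr rfl fun k hk => ?_
    have hk' : k < T := Finset.mem_range.1 hk
    congr 1
    omega
  have h3 : ∏ k ∈ Finset.range (2 * T), f k
      = ∏ k ∈ Finset.range T, (f k * f (2 * T - 1 - k)) := by
    rw [h1, h2, Finset.prod_mul_distrib]
  have h4 : ∀ k ∈ Finset.range T, f k * f (2 * T - 1 - k)
      = z * (z + z⁻¹ - 2 * Complex.cos (((2 * k + 1) * Real.pi / (2 * T) : ℝ) : ℂ)) := by
    intro k hk
    have hk' : k < T := Finset.mem_range.1 hk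
    have hcast : ((2 * (2 * T - 1 - k) + 1 : ℕ) : ℝ) = 4 * T - (2 * k + 1) := by
      have h : (2 * (2 * T - 1 - k) + 1) + (2 * k + 1) = 4 * T := by omega
      have h2 := congrArg (Nat.cast : ℕ → ℝ) h
      push_cast at h2 ⊢
      linarith
    have harg : ((2 * ((2 * T - 1 - k) : ℕ) + 1) * Real.pi / (2 * T) : ℝ)
        = 2 * Real.pi - (2 * k + 1) * Real.pi / (2 * T) := by
      have h5 : ((2 * ((2 * T - 1 - k) : ℕ) + 1) : ℝ) = ((2 * (2 * T - 1 - k) + 1 : ℕ) : ℝ) := by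
        push_cast; ring
      rw [h5, hcast]
      field_simp
      ring
    have hfk2 : f (2 * T - 1 - k)
        = z - (Complex.exp ((((2 * k + 1) * Real.pi / (2 * T) : ℝ) : ℂ) * I))⁻¹ := by
      rw [hf]
      simp only
      rw [harg]
      congr 1
      rw [← Complex.exp_neg]
      rw [show ((2 * Real.pi - (2 * k + 1) * Real.pi / (2 * T) : ℝ) : ℂ) * I
          = 2 * Real.pi * I + (-((((2 * k + 1) * Real.pi / (2 * T) : ℝ) : ℂ) * I)) by
        push_cast; ring]
      rw [Complex.exp_add, Complex.exp_two_pi_mul_I, one_mul]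
    rw [hfk2]
    exact key _
  rw [Finset.prod_congr rfl h4] at h3
  rw [Finset.prod_mul_distrib, Finset.prod_const, Finset.card_range] at h3
  have hzT : z ^ T ≠ 0 := pow_ne_zero _ hz
  apply mul_left_cancel₀ hzT
  rw [← h3, hquad]
  rw [mul_add, mul_inv_cancel₀ hzT, two_mul, pow_add]



open Complex in
lemma exp_mul_I_add_inv (θ : ℝ) :
    Complex.exp ((θ : ℂ) * I) + (Complex.exp ((θ : ℂ) * I))⁻¹ = 2 * Complex.cos (θ : ℂ) := by
  rw [← Complex.exp_neg, ← neg_mul, Complex.exp_mul_I, Complex.exp_mul_I]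
  simp only [Complex.cos_neg, Complex.sin_neg]
  ring


open Complex in
lemma prod_cheb_cos (T : ℕ) (hT : 1 ≤ T) (y : ℝ) (hy1 : -1 ≤ y) (hy2 : y ≤ 1) :
    ∏ t ∈ Finset.range T, (2 * (y - Real.cos ((2 * t + 1) * Real.pi / (2 * T))))
      = 2 * Real.cos (T * Real.arccos y) := by
  set φ := Real.arccos y with hφ
  set z : ℂ := Complex.exp ((φ : ℂ) * I) with hzdef
  have hz : z ≠ 0 := Complex.exp_ne_zero _
  have h1 : z + z⁻¹ = ((2 * y : ℝ) : ℂ) := by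
    rw [hzdef, exp_mul_I_add_inv, ← Complex.ofReal_cos, hφ, Real.cos_arccos hy1 hy2]
    push_cast; ring
  have h2 : z ^ T + (z ^ T)⁻¹ = ((2 * Real.cos (T * φ) : ℝ) : ℂ) := by
    have hzT : z ^ T = Complex.exp (((T * φ : ℝ) : ℂ) * I) := by
      rw [hzdef, ← Complex.exp_nat_mul]
      congr 1
      push_cast; ring
    rw [hzT, exp_mul_I_add_inv, ← Complex.ofReal_cos]
    push_cast; ring
  have := prod_cheb_core T hT z hz
  rw [h2] at this
  have hlhs : ∏ t ∈ Finset.range T,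
      (z + z⁻¹ - 2 * Complex.cos (((2 * t + 1) * Real.pi / (2 * T) : ℝ)))
      = ((∏ t ∈ Finset.range T, (2 * (y - Real.cos ((2 * t + 1) * Real.pi / (2 * T)))) : ℝ) : ℂ) := by
    rw [Complex.ofReal_prod]
    refine Finset.prod_congr rfl fun t _ => ?_
    rw [h1, ← Complex.ofReal_cos]
    push_cast; ring
  rw [hlhs] at this
  exact_mod_cast this

open Complex in
lemma prod_cheb_cosh (T : ℕ) (hT : 1 ≤ T) (x : ℝ) (hx : 1 < x) :
    ∏ t ∈ Finset.range T, (2 * (x - Real.cos ((2 * t + 1) * Real.pi / (2 * T))))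
      = 2 * Real.cosh (T * arcosh x) := by
  have hs2 : Real.sqrt (x ^ 2 - 1) ^ 2 = x ^ 2 - 1 := by
    rw [Real.sq_sqrt]; nlinarith
  have hypos : 0 < x + Real.sqrt (x ^ 2 - 1) := by
    have := Real.sqrt_nonneg (x ^ 2 - 1); linarith
  have hexp : Real.exp (arcosh x) = x + Real.sqrt (x ^ 2 - 1) := Real.exp_log hypos
  have hinv : (Real.exp (arcosh x))⁻¹ = x - Real.sqrt (x ^ 2 - 1) := by
    rw [hexp]
    refine (inv_eq_of_mul_eq_one_right ?_)
    nlinarith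
  set u := arcosh x with hu
  set z : ℂ := ((Real.exp u : ℝ) : ℂ) with hz0
  have hz : z ≠ 0 := by
    rw [hz0]
    exact_mod_cast (Real.exp_pos u).ne'
  have h1 : z + z⁻¹ = ((2 * x : ℝ) : ℂ) := by
    rw [hz0, ← Complex.ofReal_inv, ← Complex.ofReal_add, hinv, hexp]
    push_cast; ring
  have h2 : z ^ T + (z ^ T)⁻¹ = ((2 * Real.cosh (T * u) : ℝ) : ℂ) := by
    rw [hz0, ← Complex.ofReal_pow, ← Real.exp_nat_mul, ← Complex.ofReal_inv, ← Real.exp_neg,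
      ← Complex.ofReal_add]
    congr 1
    rw [Real.cosh_eq]
    ring
  have := prod_cheb_core T hT z hz
  rw [h2] at this
  have hlhs : ∏ t ∈ Finset.range T,
      (z + z⁻¹ - 2 * Complex.cos (((2 * t + 1) * Real.pi / (2 * T) : ℝ)))
      = ((∏ t ∈ Finset.range T, (2 * (x - Real.cos ((2 * t + 1) * Real.pi / (2 * T)))) : ℝ) : ℂ) := by
    rw [Complex.ofReal_prod]
    refine Finset.prod_congr rfl fun t _ => ?_
    rw [h1, ← Complex.ofReal_cos]
    push_cast; ring
  rw [hlhs] at this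
  exact_mod_cast this





lemma cheb_reflect (T : ℕ) (v : ℝ) :
    ∏ t ∈ Finset.range T, (v + Real.cos ((2 * t + 1) * Real.pi / (2 * T)))
      = ∏ t ∈ Finset.range T, (v - Real.cos ((2 * t + 1) * Real.pi / (2 * T))) := by
  rcases Nat.eq_zero_or_pos T with h | hTpos
  · simp [h]
  have hTR : (T : ℝ) ≠ 0 := Nat.cast_ne_zero.2 (by omega)
  rw [← Finset.prod_range_reflect (fun t => v - Real.cos ((2 * t + 1) * Real.pi / (2 * T))) T]
  refine Finset.prod_congr rfl fun t ht => ?_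
  have ht' : t < T := Finset.mem_range.1 ht
  have hcast : ((2 * (T - 1 - t) + 1 : ℕ) : ℝ) = 2 * T - (2 * t + 1) := by
    have h : (2 * (T - 1 - t) + 1) + (2 * t + 1) = 2 * T := by omega
    have h2 := congrArg (Nat.cast : ℕ → ℝ) h
    push_cast at h2 ⊢
    linarith
  have harg : ((2 * ((T - 1 - t) : ℕ) + 1) * Real.pi / (2 * T) : ℝ)
      = Real.pi - (2 * t + 1) * Real.pi / (2 * T) := by
    have h5 : ((2 * ((T - 1 - t) : ℕ) + 1) : ℝ) = ((2 * (T - 1 - t) + 1 : ℕ) : ℝ) := by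
      push_cast; ring
    rw [h5, hcast]
    field_simp
  rw [harg, Real.cos_pi_sub]
  ring

lemma cheb_scalar_bound (a b : ℝ) (ha : 0 < a) (hab : a < b) (T : ℕ) (hT : 1 ≤ T)
    (lam : ℝ) (hl1 : a ≤ lam) (hl2 : lam ≤ b) :
    |∏ t ∈ Finset.range T, (1 - chebStep a b T t * lam)|
      ≤ (Real.cosh (T * arcosh ((a + b) / (b - a))))⁻¹ := by
  have hba : b - a ≠ 0 := by linarith
  set c : ℝ := (a + b) / 2 with hc
  set s : ℝ := (b - a) / 2 with hs
  have hspos : 0 < s := by rw [hs]; linarith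
  set θ : ℕ → ℝ := fun t => (2 * t + 1) * Real.pi / (2 * T) with hθ
  set den : ℕ → ℝ := fun t => c + s * Real.cos (θ t) with hden
  have hdena : ∀ t, a ≤ den t := by
    intro t
    have h1 := Real.neg_one_le_cos (θ t)
    have h2 : -s ≤ s * Real.cos (θ t) := by nlinarith
    simp only [hden, hc, hs] at *
    linarith
  have hdenpos : ∀ t, 0 < den t := fun t => lt_of_lt_of_le ha (hdena t)
  have hfac : ∀ t, 1 - chebStep a b T t * lam = (den t)⁻¹ * (den t - lam) := by
    intro t
    have hne := (hdenpos t).ne'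
    have hstep : chebStep a b T t = (den t)⁻¹ := by
      rw [chebStep]
    rw [hstep, mul_sub, inv_mul_cancel₀ hne]
  set x : ℝ := (a + b) / (b - a) with hx
  have hxgt : 1 < x := by
    rw [hx, lt_div_iff₀ (by linarith)]
    linarith
  have hsx : s * x = c := by
    rw [hs, hx, hc]
    field_simp
  set y : ℝ := (c - lam) / s with hy
  have hsy : s * y = c - lam := by
    rw [hy]; field_simp
  have hy1 : -1 ≤ y := by
    rw [hy, le_div_iff₀ hspos, hc, hs]
    linarith
  have hy2 : y ≤ 1 := by
    rw [hy, div_le_iff₀ hspos, hc, hs]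
    linarith
  set Ch : ℝ := Real.cosh (T * arcosh x) with hCh
  set Cn : ℝ := Real.cos (T * Real.arccos y) with hCn
  have hChpos : 0 < Ch := Real.cosh_pos _
  set D : ℝ := ∏ t ∈ Finset.range T, den t with hD
  set Nn : ℝ := ∏ t ∈ Finset.range T, (den t - lam) with hNn
  have h2T : ((2:ℝ) ^ T) ≠ 0 := by positivity
  have hsT : (s ^ T) ≠ 0 := by positivity
  have hcosh2 : (2:ℝ) ^ T * ∏ t ∈ Finset.range T, (x - Real.cos (θ t)) = 2 * Ch := by
    have h := prod_cheb_cosh T hT x hxgt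
    rw [Finset.prod_mul_distrib, Finset.prod_const, Finset.card_range] at h
    exact h
  have hcos2 : (2:ℝ) ^ T * ∏ t ∈ Finset.range T, (y - Real.cos (θ t)) = 2 * Cn := by
    have h := prod_cheb_cos T hT y hy1 hy2
    rw [Finset.prod_mul_distrib, Finset.prod_const, Finset.card_range] at h
    exact h
  have hDprod : D = s ^ T * ∏ t ∈ Finset.range T, (x - Real.cos (θ t)) := by
    rw [hD]
    have : ∀ t ∈ Finset.range T, den t = s * (x + Real.cos (θ t)) := by
      intro t _
      simp only [hden]
      rw [← hsx]; ring
    rw [Finset.prod_congr rfl this, Finset.prod_mul_distrib, Finset.prod_const,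
      Finset.card_range, cheb_reflect]
  have hNprod : Nn = s ^ T * ∏ t ∈ Finset.range T, (y - Real.cos (θ t)) := by
    rw [hNn]
    have : ∀ t ∈ Finset.range T, den t - lam = s * (y + Real.cos (θ t)) := by
      intro t _
      simp only [hden]
      rw [mul_add, hsy]; ring
    rw [Finset.prod_congr rfl this, Finset.prod_mul_distrib, Finset.prod_const,
      Finset.card_range, cheb_reflect]
  have hP : ∏ t ∈ Finset.range T, (1 - chebStep a b T t * lam) = D⁻¹ * Nn := by
    rw [Finset.prod_congr rfl (fun t _ => hfac t), Finset.prod_mul_distrib,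
      Finset.prod_inv_distrib, hD, hNn]
  have hval : D⁻¹ * Nn = Cn / Ch := by
    have hxv : ∏ t ∈ Finset.range T, (x - Real.cos (θ t)) = 2 * Ch / 2 ^ T := by
      rw [eq_div_iff h2T]; linarith [hcosh2]
    have hyv : ∏ t ∈ Finset.range T, (y - Real.cos (θ t)) = 2 * Cn / 2 ^ T := by
      rw [eq_div_iff h2T]; linarith [hcos2]
    rw [hDprod, hNprod, hxv, hyv]
    field_simp
  rw [hP, hval, abs_div, abs_of_pos hChpos]
  rw [div_le_iff₀ hChpos, inv_mul_cancel₀ hChpos.ne']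
  exact Real.abs_cos_le_one _


variable {n : ℕ}

lemma sum_sq_mulVec (U : Matrix (Fin n) (Fin n) ℂ) (hU : star U * U = 1) (w : Fin n → ℂ) :
    ∑ i, ‖(U.mulVec w) i‖ ^ 2 = ∑ i, ‖w i‖ ^ 2 := by
  have key : ∀ v : Fin n → ℂ, dotProduct (star v) v = ((∑ i, ‖v i‖ ^ 2 : ℝ) : ℂ) := by
    intro v
    rw [dotProduct]
    push_cast
    refine Finset.sum_congr rfl fun i _ => ?_
    rw [Pi.star_apply]
    rw [Complex.star_def, ← Complex.normSq_eq_conj_mul_self, Complex.normSq_eq_norm_sq]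
    norm_num
  have chain : dotProduct (star (U.mulVec w)) (U.mulVec w)
      = dotProduct (star w) w := by
    rw [Matrix.star_mulVec, Matrix.dotProduct_mulVec, Matrix.vecMul_vecMul,
      ← Matrix.star_eq_conjTranspose, hU, Matrix.vecMul_one]
  rw [key, key] at chain
  exact_mod_cast chain

lemma sqrt_sum_diag_le (d : Fin n → ℂ) (B : ℝ) (hB : 0 ≤ B) (hd : ∀ i, ‖d i‖ ≤ B)
    (w : Fin n → ℂ) :
    Real.sqrt (∑ i, ‖((Matrix.diagonal d).mulVec w) i‖ ^ 2)
      ≤ B * Real.sqrt (∑ i, ‖w i‖ ^ 2) := by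
  rw [show B * Real.sqrt (∑ i, ‖w i‖ ^ 2) = Real.sqrt (B ^ 2 * ∑ i, ‖w i‖ ^ 2) by
    rw [Real.sqrt_mul (sq_nonneg B), Real.sqrt_sq hB]]
  apply Real.sqrt_le_sqrt
  rw [Finset.mul_sum]
  apply Finset.sum_le_sum
  intro i _
  rw [Matrix.mulVec_diagonal, norm_mul, mul_pow]
  have h1 : ‖d i‖ ^ 2 ≤ B ^ 2 := by
    have := norm_nonneg (d i)
    nlinarith [hd i]
  nlinarith [sq_nonneg ‖w i‖, norm_nonneg (w i)]

lemma list_prod_conj (U : Matrix (Fin n) (Fin n) ℂ) (hU1 : U * star U = 1)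
    (hU2 : star U * U = 1) (d : ℕ → Fin n → ℂ) (l : List ℕ) :
    ((l.map fun t => U * Matrix.diagonal (d t) * star U).prod)
      = U * Matrix.diagonal (fun i => (l.map fun t => d t i).prod) * star U := by
  induction l with
  | nil =>
    simp only [List.map_nil, List.prod_nil]
    rw [Matrix.diagonal_one, mul_one, hU1]
  | cons a l ih =>
    simp only [List.map_cons, List.prod_cons, ih]
    rw [show U * Matrix.diagonal (d a) * star U * (U * Matrix.diagonal (fun i => (l.map fun t => d t i).prod) * star U)
        = U * (Matrix.diagonal (d a) * (star U * U) * Matrix.diagonal (fun i => (l.map fun t => d t i).prod)) * star U by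
      simp only [Matrix.mul_assoc]]
    rw [hU2, mul_one, Matrix.diagonal_mul_diagonal]

lemma factor_conj (U : Matrix (Fin n) (Fin n) ℂ) (hU1 : U * star U = 1)
    (Λ : Fin n → ℂ) (γ : ℂ) :
    (1 : Matrix (Fin n) (Fin n) ℂ) - γ • (U * Matrix.diagonal Λ * star U)
      = U * Matrix.diagonal (fun i => 1 - γ * Λ i) * star U := by
  have hdiag : Matrix.diagonal (fun i : Fin n => 1 - γ * Λ i)
      = 1 - γ • Matrix.diagonal Λ := by
    ext i j
    rcases eq_or_ne i j with h | h
    · subst h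
      simp [Matrix.diagonal_apply_eq, Matrix.one_apply_eq]
    · simp [Matrix.diagonal_apply_ne _ h, Matrix.one_apply_ne h]
  rw [hdiag, Matrix.mul_sub, Matrix.sub_mul, mul_one, hU1]
  congr 1
  rw [Matrix.mul_smul, Matrix.smul_mul]

/-- For a Hermitian positive definite `A` with extreme eigenvalues `0 < λ1 < λn` and
`κ = λn/λ1`, for every `x ∈ ℂ^n` one has
`‖∏_{t<T}(I - γ_t^{ch} A) x‖₂ ≤ sech(T · arcosh((κ+1)/(κ-1))) ‖x‖₂`. -/
theorem norm_chebyshev_prod_mulVec_le {n : ℕ} (A : Matrix (Fin n) (Fin n) ℂ)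
    (hA : A.IsHermitian) (lam1 lamn : ℝ) (hpos : 0 < lam1) (hlt : lam1 < lamn)
    (hmin : ∀ i, lam1 ≤ hA.eigenvalues i) (hmax : ∀ i, hA.eigenvalues i ≤ lamn)
    (hminex : ∃ i, hA.eigenvalues i = lam1) (hmaxex : ∃ i, hA.eigenvalues i = lamn)
    (κ : ℝ) (hκ : κ = lamn / lam1) (T : ℕ) (hT : 1 ≤ T)
    (x : EuclideanSpace ℂ (Fin n)) :
    ‖(WithLp.equiv 2 (Fin n → ℂ)).symm
        ((((List.range T).map fun t =>
            (1 : Matrix (Fin n) (Fin n) ℂ) - (chebStep lam1 lamn T t : ℂ) • A).prod).mulVec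
          (WithLp.equiv 2 (Fin n → ℂ) x))‖ ≤
      (Real.cosh (T * arcosh ((κ + 1) / (κ - 1))))⁻¹ * ‖x‖ := by
  classical
  set U : Matrix (Fin n) (Fin n) ℂ := (hA.eigenvectorUnitary : Matrix (Fin n) (Fin n) ℂ)
    with hUdef
  have hU1 : U * star U = 1 := (Matrix.mem_unitaryGroup_iff).mp (hA.eigenvectorUnitary).2
  have hU2 : star U * U = 1 := (Matrix.mem_unitaryGroup_iff').mp (hA.eigenvectorUnitary).2
  set Λ : Fin n → ℂ := fun i => ((hA.eigenvalues i : ℝ) : ℂ) with hΛ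
  have hAeq : A = U * Matrix.diagonal Λ * star U := hA.spectral_theorem
  set B : ℝ := (Real.cosh (T * arcosh ((κ + 1) / (κ - 1))))⁻¹ with hB
  have hBnn : 0 ≤ B := le_of_lt (inv_pos.2 (Real.cosh_pos _))
  have harg : (κ + 1) / (κ - 1) = (lam1 + lamn) / (lamn - lam1) := by
    rw [hκ]
    have h0 : lam1 ≠ 0 := ne_of_gt hpos
    have h1 : lamn / lam1 + 1 = (lamn + lam1) / lam1 := by field_simp
    have h2 : lamn / lam1 - 1 = (lamn - lam1) / lam1 := by field_simp
    rw [h1, h2]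
    have h3 : lamn - lam1 ≠ 0 := by linarith
    field_simp
    ring
  have hfactors : (((List.range T).map fun t =>
        (1 : Matrix (Fin n) (Fin n) ℂ) - (chebStep lam1 lamn T t : ℂ) • A).prod)
      = U * Matrix.diagonal (fun i =>
          ((List.range T).map fun t => 1 - (chebStep lam1 lamn T t : ℂ) * Λ i).prod)
        * star U := by
    have hmapeq : ((List.range T).map fun t =>
          (1 : Matrix (Fin n) (Fin n) ℂ) - (chebStep lam1 lamn T t : ℂ) • A)
        = (List.range T).map fun t =>
          U * Matrix.diagonal (fun i => 1 - (chebStep lam1 lamn T t : ℂ) * Λ i) * star U := by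
      refine List.map_congr_left fun t _ => ?_
      rw [hAeq]
      exact factor_conj U hU1 Λ _
    rw [hmapeq, list_prod_conj U hU1 hU2]
  have hpi : ∀ i, ‖((List.range T).map fun t => 1 - (chebStep lam1 lamn T t : ℂ) * Λ i).prod‖
      ≤ B := by
    intro i
    have hlist : (((List.range T).map fun t => 1 - (chebStep lam1 lamn T t : ℂ) * Λ i).prod)
        = ((∏ t ∈ Finset.range T, (1 - chebStep lam1 lamn T t * hA.eigenvalues i) : ℝ) : ℂ) := by
      rw [show (((List.range T).map fun t => 1 - (chebStep lam1 lamn T t : ℂ) * Λ i).prod)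
          = ∏ t ∈ Finset.range T, (1 - (chebStep lam1 lamn T t : ℂ) * Λ i) from rfl]
      rw [Complex.ofReal_prod]
      refine Finset.prod_congr rfl fun t _ => ?_
      rw [hΛ]
      push_cast
      ring
    rw [hlist, Complex.norm_real, hB, harg]
    exact cheb_scalar_bound lam1 lamn hpos hlt T hT _ (hmin i) (hmax i)
  rw [hfactors]
  set p : Fin n → ℂ := fun i =>
    ((List.range T).map fun t => 1 - (chebStep lam1 lamn T t : ℂ) * Λ i).prod with hp
  set v : Fin n → ℂ := WithLp.equiv 2 (Fin n → ℂ) x with hv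
  have hmv : (U * Matrix.diagonal p * star U).mulVec v
      = U.mulVec ((Matrix.diagonal p).mulVec ((star U).mulVec v)) := by
    rw [Matrix.mulVec_mulVec, Matrix.mulVec_mulVec]
  rw [hmv]
  rw [EuclideanSpace.norm_eq, EuclideanSpace.norm_eq]
  have happly : ∀ w : Fin n → ℂ, ∀ i,
      ((WithLp.equiv 2 (Fin n → ℂ)).symm w) i = w i := fun _ _ => rfl
  simp only [happly]
  rw [sum_sq_mulVec U hU2]
  have hw : ∑ i, ‖((star U).mulVec v) i‖ ^ 2 = ∑ i, ‖v i‖ ^ 2 :=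
    sum_sq_mulVec (star U) (by rw [star_star, hU1]) v
  calc Real.sqrt (∑ i, ‖((Matrix.diagonal p).mulVec ((star U).mulVec v)) i‖ ^ 2)
      ≤ B * Real.sqrt (∑ i, ‖((star U).mulVec v) i‖ ^ 2) :=
        sqrt_sum_diag_le p B hBnn hpi _
    _ = B * Real.sqrt (∑ i, ‖x i‖ ^ 2) := by rw [hw]; rfl
end

section
/- Let 0 < ρ < 1 be a real number, set a := 1 − ρ, b := 1 and κ := b/a = 1/(1−ρ). Then for every integer T ≥ 1, [sech(T · arcosh((κ+1)/(κ−1)))]^{1/T} < ρ. That is, the per-iteration Chebyshev convergence rate is strictly smaller than the original rate ρ. -/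
lemma cosh_arcosh_of_one_le {x : ℝ} (hx : 1 ≤ x) : Real.cosh (arcosh x) = x := by
  have hs : Real.sqrt (x ^ 2 - 1) ^ 2 = x ^ 2 - 1 := by
    rw [Real.sq_sqrt]; nlinarith
  set s := Real.sqrt (x ^ 2 - 1) with hsdef
  have hs0 : 0 ≤ s := Real.sqrt_nonneg _
  have hpos : 0 < x + s := by nlinarith
  rw [arcosh, Real.cosh_eq, Real.exp_log hpos, Real.exp_neg, Real.exp_log hpos]
  have hinv : (x + s)⁻¹ = x - s :=
    inv_eq_of_mul_eq_one_right (by nlinarith)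
  rw [hinv]; ring

lemma arcosh_nonneg {x : ℝ} (hx : 1 ≤ x) : 0 ≤ arcosh x := by
  apply Real.log_nonneg
  have := Real.sqrt_nonneg (x ^ 2 - 1)
  linarith

lemma cosh_pow_le (t : ℝ) (ht : 0 ≤ t) : ∀ n : ℕ, Real.cosh t ^ n ≤ Real.cosh (n * t) := by
  intro n
  induction n with
  | zero => simp
  | succ n ih =>
    have h1 : ((n : ℝ) + 1) * t = n * t + t := by ring
    rw [pow_succ]
    push_cast [h1, Real.cosh_add]
    have hsh : 0 ≤ Real.sinh (n * t) * Real.sinh t :=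
      mul_nonneg (Real.sinh_nonneg_iff.2 (by positivity)) (Real.sinh_nonneg_iff.2 ht)
    have hc : 0 < Real.cosh t := Real.cosh_pos t
    have := mul_le_mul_of_nonneg_right ih hc.le
    linarith

/-- For `0 < ρ < 1`, `a = 1 - ρ`, `b = 1`, `κ = b/a = 1/(1-ρ)` and any `T ≥ 1`,
the per-iteration Chebyshev rate `[sech(T · arcosh((κ+1)/(κ-1)))]^{1/T}` is
strictly smaller than `ρ`. -/
theorem chebyshev_rate_lt_rho (ρ κ : ℝ) (h0 : 0 < ρ) (h1 : ρ < 1)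
    (hκ : κ = 1 / (1 - ρ)) (T : ℕ) (hT : 1 ≤ T) :
    ((Real.cosh (T * arcosh ((κ + 1) / (κ - 1))))⁻¹) ^ ((T : ℝ)⁻¹) < ρ := by
  have hρ1 : (0:ℝ) < 1 - ρ := by linarith
  have hc : (κ + 1) / (κ - 1) = (2 - ρ) / ρ := by
    rw [hκ]; field_simp; ring_nf; field_simp
  set c : ℝ := (κ + 1) / (κ - 1) with hcdef
  have hc1 : 1 < c := by
    rw [hc]
    rw [lt_div_iff₀ h0]; linarith
  have hcosh : Real.cosh (arcosh c) = c := cosh_arcosh_of_one_le hc1.le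
  have ht0 : 0 ≤ arcosh c := arcosh_nonneg hc1.le
  have hkey : (1 / ρ) ^ T < Real.cosh (T * arcosh c) := by
    calc (1 / ρ) ^ T < c ^ T := by
          apply pow_lt_pow_left₀ _ (by positivity) (by omega)
          rw [hc, div_lt_div_iff₀ h0 h0]; nlinarith
      _ = Real.cosh (arcosh c) ^ T := by rw [hcosh]
      _ ≤ Real.cosh (T * arcosh c) := cosh_pow_le _ ht0 T
  have hcoshpos : 0 < Real.cosh ((T : ℝ) * arcosh c) := Real.cosh_pos _
  have hlt : (Real.cosh ((T : ℝ) * arcosh c))⁻¹ < ρ ^ T := by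
    rw [inv_lt_iff_one_lt_mul₀ hcoshpos]
    have : (1 / ρ) ^ T * ρ ^ T = 1 := by
      rw [← mul_pow]; field_simp; exact one_pow T
    nlinarith [pow_pos h0 T, hkey]
  have hTpos : (0:ℝ) < (T:ℝ) := by exact_mod_cast hT
  calc (Real.cosh ((T : ℝ) * arcosh c))⁻¹ ^ ((T : ℝ)⁻¹)
      < (ρ ^ T) ^ ((T : ℝ)⁻¹) := by
        apply Real.rpow_lt_rpow (by positivity) hlt (by positivity)
    _ = ρ := by
        rw [← Real.rpow_natCast ρ T, ← Real.rpow_mul h0.le,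
          mul_inv_cancel₀ hTpos.ne', Real.rpow_one]
end

section
/- Let A be an n×n real symmetric invertible matrix and let Q be an n×n real diagonal matrix with nonnegative diagonal entries. Then every (complex) eigenvalue of the matrix Q·A is real; i.e., the spectrum of Q·A, viewed as a complex matrix, is contained in ℝ. -/
open Matrix

lemma my_unitary_conjugate {A : Type*} [Ring A] [Algebra ℂ A] [StarMul A] {a : A}
    {u : unitary A} : spectrum ℂ ((u : A) * a * (star u : A)) = spectrum ℂ a :=
  spectrum.units_conjugate (u := Unitary.toUnits u)

/-- The complex spectrum of a Hermitian complex matrix is real. -/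
lemma herm_spectrum_real {n : ℕ} {B : Matrix (Fin n) (Fin n) ℂ} (hB : B.IsHermitian) :
    ∀ z ∈ spectrum ℂ B, z.im = 0 := by
  intro z hz
  conv at hz => rw [hB.spectral_theorem]
  rw [Unitary.conjStarAlgAut_apply, my_unitary_conjugate, spectrum_diagonal] at hz
  obtain ⟨i, hi⟩ := hz
  rw [← hi]
  simp

/-- If `A` is a real symmetric invertible matrix and `Q` is a real diagonal matrix
with nonnegative diagonal entries, then every complex eigenvalue of `Q·A` is real. -/
theorem spectrum_diagonal_mul_symm_real {n : ℕ} (A : Matrix (Fin n) (Fin n) ℝ)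
    (hA : A.IsSymm) (hdet : A.det ≠ 0) (d : Fin n → ℝ) (hd : ∀ i, 0 ≤ d i) :
    ∀ z ∈ spectrum ℂ ((Matrix.diagonal d * A).map (Complex.ofReal)), z.im = 0 := by
  intro z hz
  by_cases hz0 : z = 0
  · simp [hz0]
  set s : Fin n → ℝ := fun i => Real.sqrt (d i) with hs
  have hcoe : (Complex.ofReal : ℝ → ℂ) = ⇑Complex.ofRealHom := rfl
  have hd' : d = fun i => s i * s i :=
    funext fun i => (Real.mul_self_sqrt (hd i)).symm
  have hdiag : Matrix.diagonal d = Matrix.diagonal s * Matrix.diagonal s := by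
    rw [Matrix.diagonal_mul_diagonal, ← hd']
  have hmap : (Matrix.diagonal d * A).map (Complex.ofReal) =
      ((Matrix.diagonal s).map Complex.ofReal) *
        ((Matrix.diagonal s * A).map Complex.ofReal) := by
    rw [hdiag, mul_assoc, hcoe, Matrix.map_mul]
  rw [hmap] at hz
  have hswap := spectrum.nonzero_mul_comm (𝕜 := ℂ)
    ((Matrix.diagonal s).map (Complex.ofReal))
    ((Matrix.diagonal s * A).map Complex.ofReal)
  have hz' : z ∈ spectrum ℂ (((Matrix.diagonal s * A).map Complex.ofReal) *
      ((Matrix.diagonal s).map Complex.ofReal)) := by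
    have : z ∈ spectrum ℂ (((Matrix.diagonal s).map (Complex.ofReal)) *
        ((Matrix.diagonal s * A).map Complex.ofReal)) \ {0} := ⟨hz, hz0⟩
    rw [hswap] at this
    exact this.1
  have hsymm : (Matrix.diagonal s * A * Matrix.diagonal s).IsSymm := by
    unfold Matrix.IsSymm
    rw [Matrix.transpose_mul, Matrix.transpose_mul, Matrix.diagonal_transpose,
      hA.eq, mul_assoc]
  have hB : (((Matrix.diagonal s * A).map Complex.ofReal) *
      ((Matrix.diagonal s).map Complex.ofReal)).IsHermitian := by
    rw [hcoe, ← Matrix.map_mul]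
    ext i j
    simp only [Matrix.conjTranspose_apply, Matrix.map_apply, Complex.ofRealHom_eq_coe,
      Complex.star_def, Complex.conj_ofReal]
    exact congrArg Complex.ofReal (hsymm.apply i j)
  exact herm_spectrum_real hB z hz'
end
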